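/- Every once-appearance branching program computing the function f(x,y) = ⋁_{i∈[n]} (x_i ∨ y_i) on 2n variables consists of a Hamiltonian path on the 2n non-sink nodes terminating in the 0-sink, where every edge labeled 0 goes to the next node of the path (or the 0-sink from the last node) and every edge labeled 1 goes to the 1-sink. -/
import Mathlib


/-- A deterministic branching program over `{0,1}` on `n` variables. Nodes are
numbered so that every edge goes to a strictly larger index (this fixes a
topological order and guarantees acyclicity). `Sum.inr b` denotes the `b`-sink. -/
structure BP (n : ℕ) where
  size : ℕ
  label : Fin size → Fin n
  next : Fin size → Bool → Fin size ⊕ Bool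
  source : Fin size ⊕ Bool
  wf : ∀ i b j, next i b = Sum.inl j → i < j

namespace BP

variable {n : ℕ}

/-- Fuel-based evaluation (the fuel `B.size` always suffices thanks to `wf`). -/
def evalAux (B : BP n) (x : Fin n → Bool) : ℕ → Fin B.size ⊕ Bool → Bool
  | _, Sum.inr b => b
  | 0, Sum.inl _ => false
  | k + 1, Sum.inl i => B.evalAux x k (B.next i (x (B.label i)))

/-- The Boolean value computed by the branching program on input `x`. -/
def eval (B : BP n) (x : Fin n → Bool) : Bool :=
  B.evalAux x B.size B.source

/-- `B` computes the total Boolean function `f`. -/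
def Computes (B : BP n) (f : (Fin n → Bool) → Bool) : Prop :=
  ∀ x, B.eval x = f x

/-- A once-appearance branching program: all node labels are distinct. -/
def IsOA (B : BP n) : Prop :=
  Function.Injective B.label

end BP

def xVar (n : ℕ) (i : Fin n) : Fin (n + n) := Fin.castAdd n i

def yVar (n : ℕ) (i : Fin n) : Fin (n + n) := Fin.natAdd n i

/-- `f(x,y) = ⋁_{i ∈ [n]} (x i ∨ y i)`. -/
def orOfOrs (n : ℕ) (x : Fin (n + n) → Bool) : Bool :=
  decide (∃ i : Fin n, x (xVar n i) = true ∨ x (yVar n i) = true)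

namespace BP

variable {n : ℕ}


variable (B : BP n)

abbrev Step (x : Fin n → Bool) (s t : Fin B.size ⊕ Bool) : Prop :=
  ∃ i, s = Sum.inl i ∧ t = B.next i (x (B.label i))

abbrev Reaches (x : Fin n → Bool) : (Fin B.size ⊕ Bool) → (Fin B.size ⊕ Bool) → Prop :=
  Relation.ReflTransGen (B.Step x)

variable {B} {x : Fin n → Bool}

theorem step_det {s t t' : Fin B.size ⊕ Bool} (h : B.Step x s t) (h' : B.Step x s t') :
    t = t' := by
  obtain ⟨i, rfl, rfl⟩ := h
  obtain ⟨j, hj, rfl⟩ := h'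
  injection hj with hj
  subst hj
  rfl

theorem reaches_inr {b : Bool} {t : Fin B.size ⊕ Bool}
    (h : B.Reaches x (Sum.inr b) t) : t = Sum.inr b := by
  induction h with
  | refl => rfl
  | tail hbc hstep ih =>
    subst ih
    obtain ⟨i, hi, -⟩ := hstep
    simp at hi

theorem reaches_le {i : Fin B.size} {t : Fin B.size ⊕ Bool}
    (h : B.Reaches x (Sum.inl i) t) :
    ∀ j : Fin B.size, t = Sum.inl j → i.val ≤ j.val := by
  induction h with
  | refl =>
    intro j hj
    injection hj with hj
    subst hj
    exact le_refl _
  | tail hbc hstep ih =>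
    intro j hj
    subst hj
    obtain ⟨i', hi', hnext⟩ := hstep
    have h1 : i' < j := B.wf i' _ j hnext.symm
    have h1' : i'.val < j.val := h1
    have h2 := ih i' hi'
    omega

theorem reaches_linear {s a b : Fin B.size ⊕ Bool} (ha : B.Reaches x s a) :
    B.Reaches x s b → B.Reaches x a b ∨ B.Reaches x b a := by
  induction ha using Relation.ReflTransGen.head_induction_on with
  | refl => exact fun hb => Or.inl hb
  | head hstep hca ih =>
    intro hb
    rcases Relation.ReflTransGen.cases_head hb with rfl | ⟨d, hd, hdb⟩
    · exact Or.inr (Relation.ReflTransGen.head hstep hca)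
    · have hde := step_det hd hstep
      exact ih (hde ▸ hdb)

theorem evalAux_reaches (fuel : ℕ) :
    ∀ s : Fin B.size ⊕ Bool, (∀ i, s = Sum.inl i → B.size ≤ i.val + fuel) →
    B.Reaches x s (Sum.inr (B.evalAux x fuel s)) := by
  induction fuel with
  | zero =>
    rintro (i | b) h
    · exact absurd (h i rfl) (by have := i.isLt; omega)
    · exact Relation.ReflTransGen.refl
  | succ fuel ih =>
    rintro (i | b) h
    · have hrec := ih (B.next i (x (B.label i))) ?_
      · exact Relation.ReflTransGen.head ⟨i, rfl, rfl⟩ hrec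
      · intro j hj
        have h1 : i < j := B.wf i _ j hj
        have h1' : i.val < j.val := h1
        have h2 := h i rfl
        omega
    · exact Relation.ReflTransGen.refl

theorem eval_reaches : B.Reaches x B.source (Sum.inr (B.eval x)) :=
  evalAux_reaches B.size B.source (fun i _ => by have := i.isLt; omega)

theorem reaches_eval_eq {b : Bool} (hb : B.Reaches x B.source (Sum.inr b)) :
    B.eval x = b := by
  rcases reaches_linear eval_reaches hb with hR | hR
  · exact (Sum.inr.inj (reaches_inr hR)).symm
  · exact Sum.inr.inj (reaches_inr hR)

end BP

def onehot (m : ℕ) (v : Fin m) : Fin m → Bool := fun w => decide (w = v)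

lemma orOfOrs_false (n : ℕ) : orOfOrs n (fun _ => false) = false := by
  simp [orOfOrs]

lemma orOfOrs_onehot (n : ℕ) (v : Fin (n + n)) :
    orOfOrs n (onehot (n + n) v) = true := by
  rw [orOfOrs, decide_eq_true_eq]
  by_cases h : v.val < n
  · refine ⟨⟨v.val, h⟩, Or.inl ?_⟩
    simp only [onehot, decide_eq_true_eq]
    exact Fin.ext rfl
  · have hv := v.isLt
    refine ⟨⟨v.val - n, by omega⟩, Or.inr ?_⟩
    simp only [onehot, decide_eq_true_eq]
    apply Fin.ext
    simp [yVar, Fin.natAdd]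
    omega

/-- every once-appearance branching program computing `⋁ᵢ (xᵢ ∨ yᵢ)` is a
Hamiltonian path on its `2n` non-sink nodes terminating in the `0`-sink: the source is
the first node, every `0`-edge goes to the next node of the path (the `0`-sink from the
last node), and every `1`-edge goes to the `1`-sink. -/
theorem oaBP_structure_orOfOrs (n : ℕ) (hn : 1 ≤ n) (B : BP (n + n))
    (hoa : B.IsOA) (hcomp : B.Computes (orOfOrs n)) :
    ∃ h : B.size = n + n,
      B.source = Sum.inl (Fin.cast h.symm ⟨0, by omega⟩) ∧
      ∀ k : Fin B.size,
        B.next k true = Sum.inr true ∧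
        B.next k false =
          (if hlt : k.val + 1 < B.size then Sum.inl ⟨k.val + 1, hlt⟩ else Sum.inr false) := by
  classical
  have hx0eval : B.eval (fun _ => false) = false := by
    rw [hcomp]; exact orOfOrs_false n
  -- every variable is the label of some node
  have hsurj : Function.Surjective B.label := by
    intro v
    by_contra hv
    push_neg at hv
    have heq : ∀ fuel s, B.evalAux (onehot (n + n) v) fuel s
        = B.evalAux (fun _ => false) fuel s := by
      intro fuel
      induction fuel with
      | zero => rintro (i | b) <;> rfl
      | succ fuel ih =>
        rintro (i | b)
        · have hl : onehot (n + n) v (B.label i) = false := by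
            simp only [onehot, decide_eq_false_iff_not]
            exact hv i
          show B.evalAux (onehot (n + n) v) fuel
              (B.next i (onehot (n + n) v (B.label i)))
            = B.evalAux (fun _ => false) fuel (B.next i false)
          rw [hl]
          exact ih _
        · rfl
    have h1 : B.eval (onehot (n + n) v) = false := by
      rw [BP.eval, heq]
      exact hx0eval
    rw [hcomp, orOfOrs_onehot] at h1
    simp at h1
  have hle : B.size ≤ n + n := by
    simpa using Fintype.card_le_of_injective B.label hoa
  have hge : n + n ≤ B.size := by
    simpa using Fintype.card_le_of_surjective B.label hsurj
  have h : B.size = n + n := le_antisymm hle hge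
  have hpos : 0 < B.size := by omega
  -- every node is reached on the all-zero input
  have hreachAll : ∀ m : Fin B.size,
      B.Reaches (fun _ => false) B.source (Sum.inl m) := by
    intro m
    by_contra hm
    have heq : ∀ fuel s, B.Reaches (fun _ => false) B.source s →
        B.evalAux (onehot (n + n) (B.label m)) fuel s
          = B.evalAux (fun _ => false) fuel s := by
      intro fuel
      induction fuel with
      | zero => rintro (i | b) _ <;> rfl
      | succ fuel ih =>
        rintro (i | b) hs
        · have him : i ≠ m := by rintro rfl; exact hm hs
          have hl : onehot (n + n) (B.label m) (B.label i) = false := by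
            simp only [onehot, decide_eq_false_iff_not]
            exact fun hc => him (hoa hc)
          show B.evalAux (onehot (n + n) (B.label m)) fuel
              (B.next i (onehot (n + n) (B.label m) (B.label i)))
            = B.evalAux (fun _ => false) fuel (B.next i false)
          rw [hl]
          exact ih _ (Relation.ReflTransGen.tail hs ⟨i, rfl, rfl⟩)
        · rfl
    have h1 : B.eval (onehot (n + n) (B.label m)) = false := by
      rw [BP.eval, heq _ _ Relation.ReflTransGen.refl]
      exact hx0eval
    rw [hcomp, orOfOrs_onehot] at h1
    simp at h1
  have hreach0 : B.Reaches (fun _ => false) B.source (Sum.inr false) := by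
    have hr := BP.eval_reaches (B := B) (x := fun _ => false)
    rwa [hx0eval] at hr
  -- the source is node 0
  have hsrc : B.source = Sum.inl ⟨0, hpos⟩ := by
    rcases hs : B.source with i | b
    · have hr := hreachAll ⟨0, hpos⟩
      rw [hs] at hr
      have hle0 : i.val ≤ 0 := BP.reaches_le hr ⟨0, hpos⟩ rfl
      exact congrArg Sum.inl (Fin.ext (Nat.le_zero.mp hle0))
    · exfalso
      have hr := hreachAll ⟨0, hpos⟩
      rw [hs] at hr
      have := BP.reaches_inr hr
      simp at this
  -- structure of the 0-edges
  have hzero : ∀ k : Fin B.size, B.next k false =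
      if hlt : k.val + 1 < B.size then Sum.inl ⟨k.val + 1, hlt⟩
      else Sum.inr false := by
    intro k
    split_ifs with hlt
    · have hk1 := hreachAll ⟨k.val + 1, hlt⟩
      have hk := hreachAll k
      rcases BP.reaches_linear hk hk1 with hR | hR
      · rcases Relation.ReflTransGen.cases_head hR with heq | ⟨c, hstep, hc⟩
        · exfalso
          injection heq with heq
          have := congrArg Fin.val heq
          simp at this
        · obtain ⟨i, hi, hnext⟩ := hstep
          injection hi with hi
          subst hi
          have hnext' : B.next k false = c := hnext.symm
          rcases c with j | b
          · have h1 : k < j := B.wf k false j hnext'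
            have h1' : k.val < j.val := h1
            have h2 : j.val ≤ k.val + 1 := BP.reaches_le hc ⟨k.val + 1, hlt⟩ rfl
            rw [hnext']
            exact congrArg Sum.inl (Fin.ext (show j.val = k.val + 1 by omega))
          · exfalso
            have := BP.reaches_inr hc
            simp at this
      · exfalso
        have h3 : k.val + 1 ≤ k.val := BP.reaches_le hR k rfl
        omega
    · have hk := hreachAll k
      rcases BP.reaches_linear hk hreach0 with hR | hR
      · rcases Relation.ReflTransGen.cases_head hR with heq | ⟨c, hstep, hc⟩
        · exact absurd heq (by simp)
        · obtain ⟨i, hi, hnext⟩ := hstep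
          injection hi with hi
          subst hi
          have hnext' : B.next k false = c := hnext.symm
          rcases c with j | b
          · exfalso
            have h1 : k < j := B.wf k false j hnext'
            have h1' : k.val < j.val := h1
            have := j.isLt
            omega
          · have hb := BP.reaches_inr hc
            injection hb with hb
            rw [hnext', ← hb]
      · exfalso
        have := BP.reaches_inr hR
        simp at this
  -- structure of the 1-edges
  have hone : ∀ k : Fin B.size, B.next k true = Sum.inr true := by
    intro k
    set e := onehot (n + n) (B.label k) with he
    have hlabF : ∀ i : Fin B.size, i ≠ k → e (B.label i) = false := by
      intro i hi
      simp only [he, onehot, decide_eq_false_iff_not]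
      exact fun hc => hi (hoa hc)
    have hlabT : e (B.label k) = true := by simp [he, onehot]
    have hreachk : B.Reaches e B.source (Sum.inl k) := by
      have key : ∀ m : ℕ, ∀ hm : m ≤ k.val,
          B.Reaches e B.source (Sum.inl ⟨m, lt_of_le_of_lt hm k.isLt⟩) := by
        intro m
        induction m with
        | zero =>
          intro _
          rw [hsrc]
        | succ m ih =>
          intro hm
          have hprev := ih (by omega)
          have hmlt : m + 1 < B.size := lt_of_le_of_lt hm k.isLt
          have hne : (⟨m, by omega⟩ : Fin B.size) ≠ k := by
            intro hc
            have := congrArg Fin.val hc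
            simp at this
            omega
          refine Relation.ReflTransGen.tail hprev ⟨⟨m, by omega⟩, rfl, ?_⟩
          rw [hlabF _ hne, hzero]
          rw [dif_pos hmlt]
      have hk := key k.val (le_refl _)
      have : (⟨k.val, lt_of_le_of_lt (le_refl _) k.isLt⟩ : Fin B.size) = k :=
        Fin.ext rfl
      rwa [this] at hk
    have hdesc : ∀ d : ℕ, ∀ i : Fin B.size, B.size - i.val ≤ d → k.val < i.val →
        B.Reaches e (Sum.inl i) (Sum.inr false) := by
      intro d
      induction d with
      | zero =>
        intro i hd _
        exact absurd hd (by have := i.isLt; omega)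
      | succ d ih =>
        intro i hd hki
        have hne : i ≠ k := by
          intro hc
          rw [hc] at hki
          omega
        by_cases hlt : i.val + 1 < B.size
        · have hz : B.next i false = Sum.inl ⟨i.val + 1, hlt⟩ := by
            rw [hzero]; rw [dif_pos hlt]
          refine Relation.ReflTransGen.head ⟨i, rfl, ?_⟩
            (ih ⟨i.val + 1, hlt⟩ (show B.size - (i.val + 1) ≤ d by omega)
              (show k.val < i.val + 1 by omega))
          rw [hlabF i hne, hz]
        · have hz : B.next i false = Sum.inr false := by
            rw [hzero]; rw [dif_neg hlt]
          refine Relation.ReflTransGen.single ⟨i, rfl, ?_⟩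
          rw [hlabF i hne, hz]
    rcases hnt : B.next k true with j | b
    · exfalso
      have hkj : k < j := B.wf k true j hnt
      have hkj' : k.val < j.val := hkj
      have hstep : B.Step e (Sum.inl k) (Sum.inl j) :=
        ⟨k, rfl, by rw [hlabT, hnt]⟩
      have hfin : B.Reaches e B.source (Sum.inr false) :=
        Relation.ReflTransGen.trans (Relation.ReflTransGen.tail hreachk hstep)
          (hdesc B.size j (by omega) hkj')
      have hev := BP.reaches_eval_eq hfin
      rw [hcomp, he, orOfOrs_onehot] at hev
      simp at hev
    · cases b with
      | true => rfl
      | false =>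
        exfalso
        have hstep : B.Step e (Sum.inl k) (Sum.inr false) :=
          ⟨k, rfl, by rw [hlabT, hnt]⟩
        have hfin : B.Reaches e B.source (Sum.inr false) :=
          Relation.ReflTransGen.tail hreachk hstep
        have hev := BP.reaches_eval_eq hfin
        rw [hcomp, he, orOfOrs_onehot] at hev
        simp at hev
  refine ⟨h, ?_, fun k => ⟨hone k, hzero k⟩⟩
  rw [hsrc]
  exact congrArg Sum.inl (Fin.ext rfl)
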